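/- Let X be a real Hilbert space, F, G : X → ℝ convex with G(x) ≥ ⟨x, y*⟩ − G*(y*) for all x and all y* (Fenchel–Young), where G*(y*) = sup_x (⟨x,y*⟩ − G(x)) is assumed finite. Define J(x) = F(x) − G(x) and J*(y*) = G*(y*) − F*(y*). Then inf over x of J(x) = inf over y* of J*(y*), provided both infima are finite and G* , F* are the Fenchel conjugates (Toland duality for D.C. functions, with the convention sup of −∞ handled by finiteness assumptions). -/

import Mathlib

/-! Both inequalities between the infima are instances of the elementary estimate
`sup (φ - f) ≤ sup (φ - g) - inf (f - g)`: for `a ≤ b` take `φ = ⟪·, y*⟫` and `(f, g) = (F, G)`;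
for `b ≤ a` take `φ = ⟪x, ·⟫` and `(f, g) = (G*, F*)`, which is where `G** = G` enters. -/

open Set

theorem le_sub_of_isLUB_range_sub {ι : Type*} {φ f g : ι → ℝ} {s t c : ℝ}
    (hs : IsLUB (range fun i => φ i - f i) s) (ht : ∀ i, φ i - g i ≤ t)
    (hc : ∀ i, c ≤ f i - g i) : c ≤ t - s := by
  have : s ≤ t - c := hs.2 <| by
    rintro _ ⟨i, rfl⟩
    linarith [ht i, hc i]
  linarith

theorem stmt2_general
    {X : Type*} [NormedAddCommGroup X] [InnerProductSpace ℝ X]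
    (F G : X → ℝ) (Fstar Gstar : X → ℝ)
    (hFstar : ∀ ystar : X,
      IsLUB (Set.range fun x : X => (inner ℝ x ystar : ℝ) - F x) (Fstar ystar))
    (hGstar : ∀ ystar : X,
      IsLUB (Set.range fun x : X => (inner ℝ x ystar : ℝ) - G x) (Gstar ystar))
    (hGbiconj : ∀ x : X,
      IsLUB (Set.range fun ystar : X => (inner ℝ x ystar : ℝ) - Gstar ystar) (G x))
    (a b : ℝ)
    (ha : IsGLB (Set.range fun x : X => F x - G x) a)
    (hb : IsGLB (Set.range fun ystar : X => Gstar ystar - Fstar ystar) b) :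
    a = b := by
  have fenchel_young_F (x y : X) : inner ℝ x y - Fstar y ≤ F x := by
    linarith [(hFstar y).1 ⟨x, rfl⟩]
  apply le_antisymm
  · refine hb.2 ?_
    rintro _ ⟨y, rfl⟩
    exact le_sub_of_isLUB_range_sub (hFstar y) (fun x => (hGstar y).1 ⟨x, rfl⟩)
      (fun x => ha.1 ⟨x, rfl⟩)
  · refine ha.2 ?_
    rintro _ ⟨x, rfl⟩
    exact le_sub_of_isLUB_range_sub (hGbiconj x) (fenchel_young_F x)
      (fun y => hb.1 ⟨y, rfl⟩)

/-- Toland duality for D.C. functions. `X` a real Hilbert space,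
`F, G : X → ℝ` convex, `F*` and `G*` their (finite) Fenchel conjugates (expressed via
`IsLUB`), and `G** = G` (G convex lsc). If `J = F − G` and `J* = G* − F*` have finite
infima `a` and `b` respectively (expressed via `IsGLB`), then `a = b`, i.e.
`inf_x J(x) = inf_{y*} J*(y*)`. -/
theorem stmt2
    {X : Type*} [NormedAddCommGroup X] [InnerProductSpace ℝ X] [CompleteSpace X]
    (F G : X → ℝ) (Fstar Gstar : X → ℝ)
    (hFconv : ConvexOn ℝ Set.univ F) (hGconv : ConvexOn ℝ Set.univ G)
    (hFstar : ∀ ystar : X,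
      IsLUB (Set.range fun x : X => (inner ℝ x ystar : ℝ) - F x) (Fstar ystar))
    (hGstar : ∀ ystar : X,
      IsLUB (Set.range fun x : X => (inner ℝ x ystar : ℝ) - G x) (Gstar ystar))
    (hGbiconj : ∀ x : X,
      IsLUB (Set.range fun ystar : X => (inner ℝ x ystar : ℝ) - Gstar ystar) (G x))
    (a b : ℝ)
    (ha : IsGLB (Set.range fun x : X => F x - G x) a)
    (hb : IsGLB (Set.range fun ystar : X => Gstar ystar - Fstar ystar) b) :
    a = b :=
  stmt2_general F G Fstar Gstar hFstar hGstar hGbiconj a b ha hb
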